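/- Let η ∈ ℕ^N, 1 ≤ i ≤ N−1 with η_i < η_{i+1}, and let I be maximal with respect to η with i, i+1 ∈ I. Then I \ {i} is maximal with respect to s_iη and c_{I\{i\}}(s_iη) = c_I(η). -/

import Mathlib

/-! Both `c_I(η)` and maximality only compare entries of `η` with the value of `η` at the next
element of `I` (cyclically, with `+1` after the last one). Let `b = i + 1`, which covers `i`.
Swapping the entries at `i` and `b` while deleting `i` from `I` leaves the value at the minimum of
any set containing both `i` and `b`, or neither, unchanged; this is the situation of every
`I ∩ (j, ∞)` with `j ≠ i`. At `i` itself, the next value of `I \ {i}` for `s_i η` is `η_i`,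
which differs from `(s_i η)_i = η_b` since `η_i < η_b`. -/

/-- The composition `c_I(η)`. -/
def cI {N : ℕ} (η : Fin N → ℕ) (I : Finset (Fin N)) : Fin N → ℕ := fun i =>
  if hi : i ∈ I then
    if h : (I.filter fun j => i < j).Nonempty
    then η ((I.filter fun j => i < j).min' h)
    else η (I.min' ⟨i, hi⟩) + 1
  else η i

/-- `I = {t_1 < … < t_s}` is maximal with respect to `η`:
`η_j ≠ η_{t_u}` for `t_{u-1} < j < t_u` and `η_j ≠ η_{t_1} + 1` for `j > t_s`. -/
def MaximalWrt {N : ℕ} (η : Fin N → ℕ) (I : Finset (Fin N)) : Prop :=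
  I.Nonempty ∧ ∀ j : Fin N, j ∉ I →
    if h : (I.filter fun t => j < t).Nonempty
    then η j ≠ η ((I.filter fun t => j < t).min' h)
    else ∀ hI : I.Nonempty, η j ≠ η (I.min' hI) + 1

open Finset

section ValAtMin

variable {α β : Type*} [LinearOrder α]

def valAtMin (η : α → β) (T : Finset α) (d : β) : β :=
  if h : T.Nonempty then η (T.min' h) else d

theorem valAtMin_filter_lt_of_covBy (η : α → β) (d : β) {a b : α} (hab : a ⋖ b) {T : Finset α}
    (hb : b ∈ T) : valAtMin η (T.filter (a < ·)) d = η b := by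
  have hbT : b ∈ T.filter (a < ·) := mem_filter.2 ⟨hb, hab.lt⟩
  rw [valAtMin, dif_pos ⟨b, hbT⟩]
  congr
  exact le_antisymm (min'_le _ _ hbT)
    (le_min' _ _ _ fun y hy => hab.ge_of_gt (mem_filter.1 hy).2)

theorem valAtMin_swap_erase (η : α → β) (d : β) {a b : α} (hab : a ⋖ b) {T : Finset α}
    (hT : a ∈ T ↔ b ∈ T) :
    valAtMin (η ∘ Equiv.swap a b) (T.erase a) d = valAtMin η T d := by
  by_cases ha : a ∈ T
  · have hbT : b ∈ T.erase a := mem_erase.2 ⟨hab.lt.ne', hT.1 ha⟩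
    rw [valAtMin, valAtMin, dif_pos ⟨b, hbT⟩, dif_pos ⟨a, ha⟩]
    by_cases hmin : T.min' ⟨a, ha⟩ = a
    · have : (T.erase a).min' ⟨b, hbT⟩ = b := by
        refine le_antisymm (min'_le _ _ hbT) (le_min' _ _ _ fun y hy => hab.ge_of_gt ?_)
        exact (hmin ▸ min'_le T y (mem_of_mem_erase hy)).lt_of_ne' (ne_of_mem_erase hy)
      simp [this, hmin]
    · have hminb : T.min' ⟨a, ha⟩ ≠ b := ((min'_le T a ha).trans_lt hab.lt).ne
      have : (T.erase a).min' ⟨b, hbT⟩ = T.min' ⟨a, ha⟩ :=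
        le_antisymm (min'_le _ _ (mem_erase.2 ⟨hmin, min'_mem _ _⟩))
          (min'_subset _ (erase_subset a T))
      rw [this, Function.comp_apply, Equiv.swap_apply_of_ne_of_ne hmin hminb]
  · have hb : b ∉ T := mt hT.2 ha
    rw [erase_eq_of_notMem ha, valAtMin, valAtMin]
    split_ifs with hne
    · have hm := min'_mem T hne
      rw [Function.comp_apply,
        Equiv.swap_apply_of_ne_of_ne (ne_of_mem_of_not_mem hm ha) (ne_of_mem_of_not_mem hm hb)]
    · rfl

end ValAtMin

section NextVal

variable {α : Type*} [LinearOrder α]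

def nextVal (η : α → ℕ) (I : Finset α) (j : α) : ℕ :=
  valAtMin η (I.filter (j < ·)) (valAtMin η I 0 + 1)

theorem nextVal_swap_erase (η : α → ℕ) {a b : α} (hab : a ⋖ b) {I : Finset α} (ha : a ∈ I)
    (hb : b ∈ I) {j : α} (hj : j ≠ a) :
    nextVal (η ∘ Equiv.swap a b) (I.erase a) j = nextVal η I j := by
  have hfilter : a ∈ I.filter (j < ·) ↔ b ∈ I.filter (j < ·) := by
    simp only [mem_filter, ha, hb, true_and, hab.lt_iff_le_left, hj.le_iff_lt]
  rw [nextVal, filter_erase, valAtMin_swap_erase η _ hab hfilter,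
    valAtMin_swap_erase η 0 hab (iff_of_true ha hb), nextVal]

end NextVal

section Compositions

variable {N : ℕ}

theorem cI_of_mem (η : Fin N → ℕ) {I : Finset (Fin N)} {k : Fin N} (hk : k ∈ I) :
    cI η I k = nextVal η I k := by
  have hI : I.Nonempty := ⟨k, hk⟩
  simp only [cI, nextVal, valAtMin, dif_pos hk, dif_pos hI]

theorem cI_of_notMem (η : Fin N → ℕ) {I : Finset (Fin N)} {k : Fin N} (hk : k ∉ I) :
    cI η I k = η k := by
  simp [cI, hk]

theorem maximalWrt_iff (η : Fin N → ℕ) (I : Finset (Fin N)) :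
    MaximalWrt η I ↔ I.Nonempty ∧ ∀ j ∉ I, η j ≠ nextVal η I j := by
  refine and_congr_right fun hI => forall₂_congr fun j _ => ?_
  simp only [nextVal, valAtMin, dif_pos hI]
  split_ifs <;> simp [hI]

end Compositions

theorem stmt_11 (N : ℕ) (η : Fin N → ℕ) (i : Fin N) (h : (i : ℕ) + 1 < N)
    (hlt : η i < η ⟨(i : ℕ) + 1, h⟩) (I : Finset (Fin N))
    (hmax : MaximalWrt η I) (hi : i ∈ I) (hi1 : (⟨(i : ℕ) + 1, h⟩ : Fin N) ∈ I) :
    MaximalWrt (η ∘ Equiv.swap i ⟨(i : ℕ) + 1, h⟩) (I.erase i) ∧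
    cI (η ∘ Equiv.swap i ⟨(i : ℕ) + 1, h⟩) (I.erase i) = cI η I := by
  set b : Fin N := ⟨(i : ℕ) + 1, h⟩
  have hib : i ⋖ b := Fin.covBy_iff.2 (Order.covBy_add_one (i : ℕ))
  have hbJ : b ∈ I.erase i := mem_erase.2 ⟨hib.lt.ne', hi1⟩
  have hfix : ∀ j ∉ I, (η ∘ Equiv.swap i b) j = η j := fun j hj =>
    congrArg η <| Equiv.swap_apply_of_ne_of_ne (ne_of_mem_of_not_mem hi hj).symm
      (ne_of_mem_of_not_mem hi1 hj).symm
  have hnext_i : nextVal (η ∘ Equiv.swap i b) (I.erase i) i = η i := by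
    rw [nextVal, valAtMin_filter_lt_of_covBy _ _ hib hbJ]
    simp
  rw [maximalWrt_iff] at hmax ⊢
  refine ⟨⟨⟨b, hbJ⟩, fun j hj => ?_⟩, funext fun k => ?_⟩
  · obtain rfl | hji := eq_or_ne j i
    · rw [hnext_i]
      simpa using hlt.ne'
    · have hjI : j ∉ I := fun hj' => hj (mem_erase.2 ⟨hji, hj'⟩)
      rw [hfix j hjI, nextVal_swap_erase η hib hi hi1 hji]
      exact hmax.2 j hjI
  · obtain rfl | hki := eq_or_ne k i
    · rw [cI_of_notMem _ (notMem_erase k I), cI_of_mem η hi, nextVal,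
        valAtMin_filter_lt_of_covBy _ _ hib hi1]
      simp
    · by_cases hkI : k ∈ I
      · rw [cI_of_mem _ (mem_erase.2 ⟨hki, hkI⟩), cI_of_mem η hkI,
          nextVal_swap_erase η hib hi hi1 hki]
      · rw [cI_of_notMem _ (fun hk => hkI (mem_of_mem_erase hk)), cI_of_notMem η hkI, hfix k hkI]
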